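/- arXiv:2601.17843 — 3 statements merged into one kernel-verified Lean document; each statement's English description precedes it below -/
import Mathlib

section
/- Let q and r be positive natural numbers and let B be a real q×r matrix. Then the real (r+q)×(r+q) block matrix O(B) with blocks O11 = (I_r + BᵀB)^{-1/2}, O12 = Bᵀ(I_q + BBᵀ)^{-1/2}, O21 = −B(I_r + BᵀB)^{-1/2}, O22 = (I_q + BBᵀ)^{-1/2} is orthogonal, i.e. O(B)ᵀ·O(B) = O(B)·O(B)ᵀ = I_{r+q}. -/
/-!
On positive semidefinite matrices `invSqrt P` is the inverse of the functional-calculus square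
root `cfc Real.sqrt P`; hence it is symmetric and `invSqrt P * P * invSqrt P = 1` when `P` is
positive definite. Writing `S`, `T` for the inverse square roots of `1 + BᵀB` and `1 + BBᵀ`,
the off-diagonal blocks of `O(B)ᵀ O(B)` cancel and its diagonal blocks are `S (1 + BᵀB) S` and
`T (1 + BBᵀ) T`. A one-sided inverse of a square matrix is two-sided, which gives `O(B) O(B)ᵀ = 1`.
-/

open Matrix

/-- Inverse of the unique symmetric positive semidefinite square root of a positive
(semi)definite real matrix (junk value `0` if `P` is not positive semidefinite). -/
noncomputable def invSqrt {n : Type*} [Fintype n] [DecidableEq n]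
    (P : Matrix n n ℝ) : Matrix n n ℝ := by
  classical exact if h : P.PosSemidef then ((h.1.eigenvectorUnitary : Matrix n n ℝ) *
      diagonal ((↑) ∘ (√·) ∘ h.1.eigenvalues) * (star h.1.eigenvectorUnitary : Matrix n n ℝ))⁻¹
    else 0

section InvSqrt

variable {n : Type*} [Fintype n] [DecidableEq n] {P : Matrix n n ℝ}

theorem invSqrt_eq_inv_cfc_sqrt (hP : P.PosSemidef) : invSqrt P = (cfc Real.sqrt P)⁻¹ := by
  rw [invSqrt, dif_pos hP, hP.1.cfc_eq]
  rfl

theorem Matrix.PosSemidef.cfc_sqrt_mul_self (hP : P.PosSemidef) :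
    cfc Real.sqrt P * cfc Real.sqrt P = P := by
  rw [← cfc_mul Real.sqrt Real.sqrt P]
  conv_rhs => rw [← cfc_id' ℝ P hP.1.isSelfAdjoint]
  refine cfc_congr fun x hx => Real.mul_self_sqrt ?_
  rw [hP.1.spectrum_real_eq_range_eigenvalues] at hx
  obtain ⟨i, rfl⟩ := hx
  exact hP.eigenvalues_nonneg i

theorem invSqrt_transpose (hP : P.PosSemidef) : (invSqrt P)ᵀ = invSqrt P := by
  rw [invSqrt_eq_inv_cfc_sqrt hP, transpose_nonsing_inv, ← conjTranspose_eq_transpose_of_trivial]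
  exact congrArg _ IsSelfAdjoint.cfc

theorem invSqrt_mul_self_mul_invSqrt (hP : P.PosDef) : invSqrt P * P * invSqrt P = 1 := by
  have hR := hP.posSemidef.cfc_sqrt_mul_self
  have hdet : IsUnit (cfc Real.sqrt P).det := by
    refine isUnit_of_mul_isUnit_left (y := (cfc Real.sqrt P).det) ?_
    rw [← det_mul, hR]
    exact hP.det_pos.ne'.isUnit
  rw [invSqrt_eq_inv_cfc_sqrt hP.posSemidef]
  nth_rw 2 [← hR]
  rw [← Matrix.mul_assoc, nonsing_inv_mul _ hdet, Matrix.one_mul, mul_nonsing_inv _ hdet]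

end InvSqrt

theorem fromBlocks_transpose_mul_self_eq_one {m n R : Type*} [Fintype m] [Fintype n]
    [DecidableEq m] [DecidableEq n] [CommRing R] {B : Matrix m n R} {S : Matrix n n R}
    {T : Matrix m m R} (hS : Sᵀ = S) (hT : Tᵀ = T) (hSB : S * (1 + Bᵀ * B) * S = 1)
    (hTB : T * (1 + B * Bᵀ) * T = 1) :
    (fromBlocks S (Bᵀ * T) (-(B * S)) T)ᵀ * fromBlocks S (Bᵀ * T) (-(B * S)) T = 1 := by
  rw [fromBlocks_transpose, fromBlocks_multiply, ← fromBlocks_one, ← hSB, ← hTB]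
  simp only [transpose_neg, transpose_mul, transpose_transpose, hS, hT]
  congr 1 <;> simp only [Matrix.mul_add, Matrix.add_mul, Matrix.mul_one, Matrix.mul_assoc,
    Matrix.neg_mul, Matrix.mul_neg, neg_neg] <;> abel

theorem stmt_0_general (q r : ℕ) (B : Matrix (Fin q) (Fin r) ℝ) :
    (fromBlocks (invSqrt (1 + Bᵀ * B)) (Bᵀ * invSqrt (1 + B * Bᵀ))
        (-(B * invSqrt (1 + Bᵀ * B))) (invSqrt (1 + B * Bᵀ)))ᵀ *
      fromBlocks (invSqrt (1 + Bᵀ * B)) (Bᵀ * invSqrt (1 + B * Bᵀ))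
        (-(B * invSqrt (1 + Bᵀ * B))) (invSqrt (1 + B * Bᵀ)) = 1 ∧
    fromBlocks (invSqrt (1 + Bᵀ * B)) (Bᵀ * invSqrt (1 + B * Bᵀ))
        (-(B * invSqrt (1 + Bᵀ * B))) (invSqrt (1 + B * Bᵀ)) *
      (fromBlocks (invSqrt (1 + Bᵀ * B)) (Bᵀ * invSqrt (1 + B * Bᵀ))
        (-(B * invSqrt (1 + Bᵀ * B))) (invSqrt (1 + B * Bᵀ)))ᵀ = 1 := by
  have hP : (1 + Bᵀ * B).PosDef :=
    PosDef.one.add_posSemidef (by simpa using posSemidef_conjTranspose_mul_self B)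
  have hQ : (1 + B * Bᵀ).PosDef :=
    PosDef.one.add_posSemidef (by simpa using posSemidef_self_mul_conjTranspose B)
  have hO := fromBlocks_transpose_mul_self_eq_one (invSqrt_transpose hP.posSemidef)
    (invSqrt_transpose hQ.posSemidef) (invSqrt_mul_self_mul_invSqrt hP)
    (invSqrt_mul_self_mul_invSqrt hQ)
  exact ⟨hO, mul_eq_one_comm.mp hO⟩

/-- for any real `q × r` matrix `B`, the block matrix
`O(B) = [[(I_r + BᵀB)^{-1/2}, Bᵀ(I_q + BBᵀ)^{-1/2}], [-B(I_r + BᵀB)^{-1/2}, (I_q + BBᵀ)^{-1/2}]]`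
is orthogonal. -/
theorem stmt_0 (q r : ℕ) (hq : 0 < q) (hr : 0 < r) (B : Matrix (Fin q) (Fin r) ℝ) :
    (fromBlocks (invSqrt (1 + Bᵀ * B)) (Bᵀ * invSqrt (1 + B * Bᵀ))
        (-(B * invSqrt (1 + Bᵀ * B))) (invSqrt (1 + B * Bᵀ)))ᵀ *
      fromBlocks (invSqrt (1 + Bᵀ * B)) (Bᵀ * invSqrt (1 + B * Bᵀ))
        (-(B * invSqrt (1 + Bᵀ * B))) (invSqrt (1 + B * Bᵀ)) = 1 ∧
    fromBlocks (invSqrt (1 + Bᵀ * B)) (Bᵀ * invSqrt (1 + B * Bᵀ))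
        (-(B * invSqrt (1 + Bᵀ * B))) (invSqrt (1 + B * Bᵀ)) *
      (fromBlocks (invSqrt (1 + Bᵀ * B)) (Bᵀ * invSqrt (1 + B * Bᵀ))
        (-(B * invSqrt (1 + Bᵀ * B))) (invSqrt (1 + B * Bᵀ)))ᵀ = 1 :=
  stmt_0_general q r B
end

section
/- Let k, q, r be positive natural numbers with k > q, set k₁ = k − q, and let Ξ be a real k×(r+q) matrix partitioned into blocks Ξ₁₁ ∈ ℝ^{k₁×r}, Ξ₁₂ ∈ ℝ^{k₁×q} (top row of blocks) and Ξ₂₁ ∈ ℝ^{q×r}, Ξ₂₂ ∈ ℝ^{q×q} (bottom row of blocks), where Ξ₂₂ is invertible. Let B = Ξ₂₂^{-1}Ξ₂₁ and let O(B) be the block-orthogonal matrix with blocks O11 = (I_r + BᵀB)^{-1/2}, O12 = Bᵀ(I_q + BBᵀ)^{-1/2}, O21 = −B(I_r + BᵀB)^{-1/2}, O22 = (I_q + BBᵀ)^{-1/2}. Then the matrix Ξ̃ = Ξ·O(B) has blocks Ξ̃₂₁ = 0, Ξ̃₁₁ = (Ξ₁₁ − Ξ₁₂Ξ₂₂^{-1}Ξ₂₁)·O11,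 Ξ̃₁₂ = (Ξ₁₁Ξ₂₁ᵀ(Ξ₂₂^{-1})ᵀ + Ξ₁₂)·O22, and Ξ̃₂₂ = (Ξ₂₁Ξ₂₁ᵀ(Ξ₂₂^{-1})ᵀ + Ξ₂₂)·O22. -/
open Matrix

/-- The block-orthogonal matrix `O(B)` built from a `q × r` matrix `B`. -/
noncomputable def Omat {q r : ℕ} (B : Matrix (Fin q) (Fin r) ℝ) :
    Matrix (Fin r ⊕ Fin q) (Fin r ⊕ Fin q) ℝ :=
  fromBlocks (invSqrt (1 + Bᵀ * B)) (Bᵀ * invSqrt (1 + B * Bᵀ))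
    (-(B * invSqrt (1 + Bᵀ * B))) (invSqrt (1 + B * Bᵀ))

theorem fromBlocks_mul_Omat {m₁ m₂ : Type*} [Fintype m₁] [Fintype m₂] {q r : ℕ}
    (A₁₁ : Matrix m₁ (Fin r) ℝ) (A₁₂ : Matrix m₁ (Fin q) ℝ)
    (A₂₁ : Matrix m₂ (Fin r) ℝ) (A₂₂ : Matrix m₂ (Fin q) ℝ) (B : Matrix (Fin q) (Fin r) ℝ) :
    fromBlocks A₁₁ A₁₂ A₂₁ A₂₂ * Omat B =
      fromBlocks ((A₁₁ - A₁₂ * B) * invSqrt (1 + Bᵀ * B)) ((A₁₁ * Bᵀ + A₁₂) * invSqrt (1 + B * Bᵀ))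
        ((A₂₁ - A₂₂ * B) * invSqrt (1 + Bᵀ * B)) ((A₂₁ * Bᵀ + A₂₂) * invSqrt (1 + B * Bᵀ)) := by
  simp only [Omat, fromBlocks_multiply, Matrix.mul_neg, Matrix.neg_mul, Matrix.add_mul,
    Matrix.mul_assoc, sub_eq_add_neg]

theorem stmt_2_general (k q r : ℕ)
    (Ξ₁₁ : Matrix (Fin (k - q)) (Fin r) ℝ) (Ξ₁₂ : Matrix (Fin (k - q)) (Fin q) ℝ)
    (Ξ₂₁ : Matrix (Fin q) (Fin r) ℝ) (Ξ₂₂ : Matrix (Fin q) (Fin q) ℝ)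
    (hΞ₂₂ : IsUnit Ξ₂₂) :
    (fromBlocks Ξ₁₁ Ξ₁₂ Ξ₂₁ Ξ₂₂ * Omat (Ξ₂₂⁻¹ * Ξ₂₁)).toBlocks₂₁ = 0 ∧
    (fromBlocks Ξ₁₁ Ξ₁₂ Ξ₂₁ Ξ₂₂ * Omat (Ξ₂₂⁻¹ * Ξ₂₁)).toBlocks₁₁
      = (Ξ₁₁ - Ξ₁₂ * Ξ₂₂⁻¹ * Ξ₂₁) * invSqrt (1 + (Ξ₂₂⁻¹ * Ξ₂₁)ᵀ * (Ξ₂₂⁻¹ * Ξ₂₁)) ∧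
    (fromBlocks Ξ₁₁ Ξ₁₂ Ξ₂₁ Ξ₂₂ * Omat (Ξ₂₂⁻¹ * Ξ₂₁)).toBlocks₁₂
      = (Ξ₁₁ * Ξ₂₁ᵀ * (Ξ₂₂⁻¹)ᵀ + Ξ₁₂) * invSqrt (1 + (Ξ₂₂⁻¹ * Ξ₂₁) * (Ξ₂₂⁻¹ * Ξ₂₁)ᵀ) ∧
    (fromBlocks Ξ₁₁ Ξ₁₂ Ξ₂₁ Ξ₂₂ * Omat (Ξ₂₂⁻¹ * Ξ₂₁)).toBlocks₂₂
      = (Ξ₂₁ * Ξ₂₁ᵀ * (Ξ₂₂⁻¹)ᵀ + Ξ₂₂) * invSqrt (1 + (Ξ₂₂⁻¹ * Ξ₂₁) * (Ξ₂₂⁻¹ * Ξ₂₁)ᵀ) := by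
  have hB : Ξ₂₂ * (Ξ₂₂⁻¹ * Ξ₂₁) = Ξ₂₁ := mul_nonsing_inv_cancel_left _ _
    ((isUnit_iff_isUnit_det _).mp hΞ₂₂)
  simp only [fromBlocks_mul_Omat, toBlocks_fromBlocks₁₁, toBlocks_fromBlocks₁₂,
    toBlocks_fromBlocks₂₁, toBlocks_fromBlocks₂₂, hB, sub_self, Matrix.zero_mul,
    transpose_mul, Matrix.mul_assoc, true_and]

/-- block structure of `Ξ̃ = Ξ · O(B)` with `B = Ξ₂₂⁻¹ Ξ₂₁`. -/
theorem stmt_2 (k q r : ℕ) (hq : 0 < q) (hr : 0 < r) (hk : q < k)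
    (Ξ₁₁ : Matrix (Fin (k - q)) (Fin r) ℝ) (Ξ₁₂ : Matrix (Fin (k - q)) (Fin q) ℝ)
    (Ξ₂₁ : Matrix (Fin q) (Fin r) ℝ) (Ξ₂₂ : Matrix (Fin q) (Fin q) ℝ)
    (hΞ₂₂ : IsUnit Ξ₂₂) :
    (fromBlocks Ξ₁₁ Ξ₁₂ Ξ₂₁ Ξ₂₂ * Omat (Ξ₂₂⁻¹ * Ξ₂₁)).toBlocks₂₁ = 0 ∧
    (fromBlocks Ξ₁₁ Ξ₁₂ Ξ₂₁ Ξ₂₂ * Omat (Ξ₂₂⁻¹ * Ξ₂₁)).toBlocks₁₁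
      = (Ξ₁₁ - Ξ₁₂ * Ξ₂₂⁻¹ * Ξ₂₁) * invSqrt (1 + (Ξ₂₂⁻¹ * Ξ₂₁)ᵀ * (Ξ₂₂⁻¹ * Ξ₂₁)) ∧
    (fromBlocks Ξ₁₁ Ξ₁₂ Ξ₂₁ Ξ₂₂ * Omat (Ξ₂₂⁻¹ * Ξ₂₁)).toBlocks₁₂
      = (Ξ₁₁ * Ξ₂₁ᵀ * (Ξ₂₂⁻¹)ᵀ + Ξ₁₂) * invSqrt (1 + (Ξ₂₂⁻¹ * Ξ₂₁) * (Ξ₂₂⁻¹ * Ξ₂₁)ᵀ) ∧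
    (fromBlocks Ξ₁₁ Ξ₁₂ Ξ₂₁ Ξ₂₂ * Omat (Ξ₂₂⁻¹ * Ξ₂₁)).toBlocks₂₂
      = (Ξ₂₁ * Ξ₂₁ᵀ * (Ξ₂₂⁻¹)ᵀ + Ξ₂₂) * invSqrt (1 + (Ξ₂₂⁻¹ * Ξ₂₁) * (Ξ₂₂⁻¹ * Ξ₂₁)ᵀ) :=
  stmt_2_general k q r Ξ₁₁ Ξ₁₂ Ξ₂₁ Ξ₂₂ hΞ₂₂
end

section
/- Let q be a positive natural number, let E be a fixed real q×q matrix, and for t ∈ ℝ let D(t) be a real q×q diagonal matrix whose minimal diagonal entry tends to +∞ as t → ∞. Then there exists T such that for all t ≥ T the matrix D(t) + E is invertible, and (D(t) + E)^{-1} → 0 (entrywise, equivalently in any matrix norm) as t → ∞. -/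
/-!
Write `D + E = D (1 + D⁻¹ E)`. Since `D⁻¹ → 0`, the second factor tends to `1`, so it is
eventually invertible, and by continuity of inversion at `1` we get
`(D + E)⁻¹ = (1 + D⁻¹ E)⁻¹ D⁻¹ → 1 · 0 = 0`.
-/

open Matrix Filter Topology

namespace Matrix

variable {n K α : Type*} [Fintype n] [DecidableEq n] [Field K]

theorem add_eq_mul_one_add_inv_mul {A : Matrix n n K} (hA : IsUnit A) (E : Matrix n n K) :
    A + E = A * (1 + A⁻¹ * E) := by
  rw [mul_add, mul_one, ← mul_assoc, mul_nonsing_inv _ ((isUnit_iff_isUnit_det A).mp hA), one_mul]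

theorem inv_diagonal_of_ne_zero {v : n → K} (hv : ∀ j, v j ≠ 0) :
    (diagonal v)⁻¹ = diagonal v⁻¹ :=
  inv_eq_left_inv <| by simp [diagonal_mul_diagonal, inv_mul_cancel₀ (hv _)]

section TopologicalField

variable [TopologicalSpace K] [IsTopologicalRing K]

theorem eventually_isUnit_one_add [T1Space K] {l : Filter α} {B : α → Matrix n n K}
    (hB : Tendsto B l (𝓝 0)) : ∀ᶠ t in l, IsUnit (1 + B t) := by
  have hdet : Tendsto (fun t => (1 + B t).det) l (𝓝 1) := by
    simpa only [Function.comp_def, id, add_zero, det_one] using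
      (continuous_id.matrix_det.tendsto _).comp (hB.const_add (1 : Matrix n n K))
  filter_upwards [hdet.eventually_ne one_ne_zero] with t ht
  exact (isUnit_iff_isUnit_det _).mpr ht.isUnit

variable [ContinuousInv₀ K]

theorem continuousAt_inv_one : ContinuousAt Inv.inv (1 : Matrix n n K) :=
  continuousAt_matrix_inv 1 <| by
    simpa only [det_one, Ring.inverse_eq_inv'] using continuousAt_inv₀ (one_ne_zero (α := K))

theorem eventually_isUnit_add_and_tendsto_inv_add [T1Space K] {l : Filter α}
    {A : α → Matrix n n K} (hA : ∀ᶠ t in l, IsUnit (A t))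
    (hA_inv : Tendsto (fun t => (A t)⁻¹) l (𝓝 0)) (E : Matrix n n K) :
    (∀ᶠ t in l, IsUnit (A t + E)) ∧ Tendsto (fun t => (A t + E)⁻¹) l (𝓝 0) := by
  have hB : Tendsto (fun t => (A t)⁻¹ * E) l (𝓝 0) := by
    simpa only [zero_mul] using hA_inv.mul_const E
  have hB_inv : Tendsto (fun t => (1 + (A t)⁻¹ * E)⁻¹) l (𝓝 1) := by
    have h := hB.const_add (1 : Matrix n n K)
    rw [add_zero] at h
    simpa only [Function.comp_def, inv_one] using continuousAt_inv_one.tendsto.comp h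
  have hfactor : ∀ᶠ t in l, A t + E = A t * (1 + (A t)⁻¹ * E) :=
    hA.mono fun t ht => add_eq_mul_one_add_inv_mul ht E
  refine ⟨?_, ?_⟩
  · filter_upwards [hA, eventually_isUnit_one_add hB, hfactor] with t hAt hBt ht
    exact ht ▸ hAt.mul hBt
  · refine ((hB_inv.mul hA_inv).congr' ?_).trans (by rw [mul_zero])
    filter_upwards [hfactor] with t ht
    rw [ht, mul_inv_rev]

end TopologicalField

variable [LinearOrder K] [IsStrictOrderedRing K] [TopologicalSpace K] [OrderTopology K]

theorem eventually_isUnit_diagonal_and_tendsto_inv_diagonal {l : Filter α} {d : α → n → K}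
    (hd : ∀ j, Tendsto (fun t => d t j) l atTop) :
    (∀ᶠ t in l, IsUnit (diagonal (d t))) ∧ Tendsto (fun t => (diagonal (d t))⁻¹) l (𝓝 0) := by
  have hne : ∀ᶠ t in l, ∀ j, d t j ≠ 0 := eventually_all.mpr fun j => (hd j).eventually_ne_atTop 0
  have hlim : Tendsto (fun t => diagonal (d t)⁻¹) l (𝓝 0) := by
    have hinv : Tendsto (fun t => (d t)⁻¹) l (𝓝 0) :=
      tendsto_pi_nhds.mpr fun j => (hd j).inv_tendsto_atTop
    simpa only [Function.comp_def, id, diagonal_zero'] using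
      (continuous_id.matrix_diagonal.tendsto _).comp hinv
  refine ⟨?_, hlim.congr' ?_⟩
  · filter_upwards [hne] with t ht
    exact isUnit_diagonal.mpr (Pi.isUnit_iff.mpr fun j => (ht j).isUnit)
  · filter_upwards [hne] with t ht
    rw [inv_diagonal_of_ne_zero ht]

end Matrix

theorem stmt_3_general (q : ℕ) (E : Matrix (Fin q) (Fin q) ℝ)
    (d : ℝ → Fin q → ℝ)
    (hd : Tendsto (fun t => ⨅ j, d t j) atTop atTop) :
    (∃ T : ℝ, ∀ t ≥ T, IsUnit (Matrix.diagonal (d t) + E)) ∧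
    Tendsto (fun t => (Matrix.diagonal (d t) + E)⁻¹) atTop
      (nhds (0 : Matrix (Fin q) (Fin q) ℝ)) := by
  have hdj : ∀ j, Tendsto (fun t => d t j) atTop atTop := fun j =>
    tendsto_atTop_mono (fun t => ciInf_le (Set.finite_range _).bddBelow j) hd
  obtain ⟨hD, hD_inv⟩ := eventually_isUnit_diagonal_and_tendsto_inv_diagonal hdj
  obtain ⟨hDE, hDE_inv⟩ := eventually_isUnit_add_and_tendsto_inv_add hD hD_inv E
  exact ⟨eventually_atTop.mp hDE, hDE_inv⟩

/-- if the minimal diagonal entry of the diagonal matrices `D(t)` tends to `+∞`,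
then for `t` large `D(t) + E` is invertible, and `(D(t) + E)⁻¹ → 0` as `t → ∞`. -/
theorem stmt_3 (q : ℕ) (hq : 0 < q) (E : Matrix (Fin q) (Fin q) ℝ)
    (d : ℝ → Fin q → ℝ)
    (hd : Tendsto (fun t => ⨅ j, d t j) atTop atTop) :
    (∃ T : ℝ, ∀ t ≥ T, IsUnit (Matrix.diagonal (d t) + E)) ∧
    Tendsto (fun t => (Matrix.diagonal (d t) + E)⁻¹) atTop
      (nhds (0 : Matrix (Fin q) (Fin q) ℝ)) :=
  stmt_3_general q E d hd
end
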